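/- Suppose the interaction graph is the undirected ring on V = {1,…,n} with n ≥ 3 (indices mod n, N_i = {i−1, i+1}, so n_i = 2 for every i), and p_i(0) ∈ (0,1) for all i. If the opinion sequence (p_i(k))_{k≥0} of some agent i converges to a limit p* ∈ (0,1), then p* = 1/2; hence every limit of a convergent opinion sequence on the ring belongs to {0, 1/2, 1}. -/

import Mathlib

/-!
Write `a` for the mean action of an agent's in-neighbours. The CODA update is then
`p ↦ p + p (1 - p) (a - p)`, which keeps `p` in `(0, 1)`. Near a limit `c ∈ (0, 1)` the rate
`p (1 - p)` is bounded away from zero, so `a` is recovered from the increments of `p` and tends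
to `c`. Since `n_i a` is a natural number, `n_i c` is one as well, and on the ring `n_i ≤ 2`
forces `c = 1/2`.
-/

open Filter Topology Set

def codaStep (a x : ℝ) : ℝ := x + x * (1 - x) * (a - x)

theorem codaStep_mem_Ioo {a x : ℝ} (ha : a ∈ Icc 0 1) (hx : x ∈ Ioo 0 1) :
    codaStep a x ∈ Ioo 0 1 := by
  obtain ⟨ha0, ha1⟩ := ha
  obtain ⟨hx0, hx1⟩ := hx
  have hg : 0 < x * (1 - x) := mul_pos hx0 (by linarith)
  constructor <;> unfold codaStep <;> nlinarith [mul_pos hg hx0, mul_pos hg (sub_pos.2 hx1)]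

theorem add_mul_sum_sub_eq_codaStep {ι : Type*} {s : Finset ι} (hs : s.Nonempty)
    (g : ι → ℝ) (x : ℝ) :
    x + x * (1 - x) / s.card * ∑ j ∈ s, (g j - x) = codaStep ((∑ j ∈ s, g j) / s.card) x := by
  have hcard : (s.card : ℝ) ≠ 0 := by exact_mod_cast hs.card_ne_zero
  rw [codaStep, Finset.sum_sub_distrib, Finset.sum_const, nsmul_eq_mul]
  field_simp

theorem sum_div_card_mem_Icc {ι : Type*} {s : Finset ι} {g : ι → ℝ}
    (hg : ∀ j ∈ s, g j ∈ Icc 0 1) : (∑ j ∈ s, g j) / s.card ∈ Icc 0 1 := by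
  refine ⟨div_nonneg (Finset.sum_nonneg fun j hj => (hg j hj).1) (Nat.cast_nonneg _),
    div_le_one_of_le₀ ?_ (Nat.cast_nonneg _)⟩
  simpa using Finset.sum_le_card_nsmul s g 1 fun j hj => (hg j hj).2

theorem mem_Ioo_of_codaStep {x a : ℕ → ℝ} (hx : ∀ k, x (k + 1) = codaStep (a k) (x k))
    (ha : ∀ k, a k ∈ Icc 0 1) (hx0 : x 0 ∈ Ioo 0 1) (k : ℕ) : x k ∈ Ioo 0 1 := by
  induction k with
  | zero => exact hx0
  | succ k ih => exact hx k ▸ codaStep_mem_Ioo (ha k) ih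

theorem tendsto_of_codaStep {x a : ℕ → ℝ} {c : ℝ} (hx : ∀ k, x (k + 1) = codaStep (a k) (x k))
    (hlim : Tendsto x atTop (𝓝 c)) (hc0 : c ≠ 0) (hc1 : c ≠ 1) : Tendsto a atTop (𝓝 c) := by
  have hrate : Tendsto (fun k => x k * (1 - x k)) atTop (𝓝 (c * (1 - c))) :=
    hlim.mul (tendsto_const_nhds.sub hlim)
  have hrate_ne : c * (1 - c) ≠ 0 := mul_ne_zero hc0 (sub_ne_zero.2 (Ne.symm hc1))
  have hincr : Tendsto (fun k => x (k + 1) - x k) atTop (𝓝 0) := by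
    simpa using (hlim.comp (tendsto_add_atTop_nat 1)).sub hlim
  have hrecover : ∀ᶠ k in atTop, (x (k + 1) - x k) / (x k * (1 - x k)) + x k = a k := by
    filter_upwards [hrate.eventually_ne hrate_ne] with k hk
    rw [hx k, codaStep, add_sub_cancel_left, mul_div_cancel_left₀ _ hk, sub_add_cancel]
  simpa using ((hincr.div hrate hrate_ne).add hlim).congr' hrecover

theorem exists_natCast_eq_of_tendsto {Q : ℕ → ℕ} {y : ℝ}
    (h : Tendsto (fun k => (Q k : ℝ)) atTop (𝓝 y)) : ∃ m : ℕ, (m : ℝ) = y :=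
  Nat.isClosedEmbedding_coe_real.isClosed_range.mem_of_tendsto h (.of_forall fun k => ⟨Q k, rfl⟩)

theorem eq_half_of_mul_eq_natCast {d m : ℕ} {c : ℝ} (hd0 : 0 < d) (hd : d ≤ 2)
    (hc : c ∈ Ioo 0 1) (h : (d : ℝ) * c = m) : c = 1 / 2 := by
  obtain ⟨hc0, hc1⟩ := hc
  have hdR : (0 : ℝ) < d := by exact_mod_cast hd0
  have hm0 : 0 < m := by exact_mod_cast (show (0 : ℝ) < m from h ▸ mul_pos hdR hc0)
  have hmd : m < d := by
    exact_mod_cast (show (m : ℝ) < d from h ▸ mul_lt_of_lt_one_right hdR hc1)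
  obtain ⟨rfl, rfl⟩ : m = 1 ∧ d = 2 := by omega
  push_cast at h
  linarith

theorem stmt_17_general
    (n : ℕ) [NeZero n]
    (N : Fin n → Finset (Fin n))
    (hring : ∀ i : Fin n, N i = {i - 1, i + 1})
    (p : Fin n → ℕ → ℝ) (q : Fin n → ℕ → ℕ)
    (hq0 : ∀ i k, (p i k < 1 / 2 ∨ (p i k = 1 / 2 ∧ p i (k - 1) < 1 / 2)) → q i k = 0)
    (hq1 : ∀ i k, ¬(p i k < 1 / 2 ∨ (p i k = 1 / 2 ∧ p i (k - 1) < 1 / 2)) → q i k = 1)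
    (hupd : ∀ i k, p i (k + 1) =
      p i k + p i k * (1 - p i k) / (N i).card * ∑ j ∈ N i, ((q j k : ℝ) - p i k))
    (hp0 : ∀ i, p i 0 ∈ Set.Ioo (0 : ℝ) 1) :
    (∀ i : Fin n, ∀ c : ℝ, c ∈ Set.Ioo (0 : ℝ) 1 →
      Filter.Tendsto (fun k => p i k) Filter.atTop (nhds c) → c = 1 / 2) ∧
    (∀ i : Fin n, ∀ c : ℝ,
      Filter.Tendsto (fun k => p i k) Filter.atTop (nhds c) →
      c = 0 ∨ c = 1 / 2 ∨ c = 1) := by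
  have hN : ∀ i, (N i).Nonempty := fun i => by simp [hring i]
  have hq : ∀ i k, (q i k : ℝ) ∈ Icc 0 1 := fun i k => by
    by_cases h : p i k < 1 / 2 ∨ (p i k = 1 / 2 ∧ p i (k - 1) < 1 / 2)
    · simp [hq0 i k h]
    · simp [hq1 i k h]
  set a := fun i k => (∑ j ∈ N i, (q j k : ℝ)) / (N i).card
  have hstep : ∀ i k, p i (k + 1) = codaStep (a i k) (p i k) := fun i k =>
    (hupd i k).trans (add_mul_sum_sub_eq_codaStep (hN i) _ _)
  have hmem : ∀ i k, p i k ∈ Ioo 0 1 := fun i =>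
    mem_Ioo_of_codaStep (hstep i) (fun k => sum_div_card_mem_Icc fun j _ => hq j k) (hp0 i)
  have half : ∀ i : Fin n, ∀ c : ℝ, c ∈ Ioo (0 : ℝ) 1 →
      Tendsto (fun k => p i k) atTop (𝓝 c) → c = 1 / 2 := by
    rintro i c hc hlim
    have hsum : Tendsto (fun k => ((∑ j ∈ N i, q j k : ℕ) : ℝ)) atTop (𝓝 ((N i).card * c)) := by
      refine ((tendsto_of_codaStep (hstep i) hlim hc.1.ne' hc.2.ne).const_mul _).congr fun k => ?_
      have hcard : ((N i).card : ℝ) ≠ 0 := Nat.cast_ne_zero.2 (hN i).card_ne_zero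
      simp only [a, Nat.cast_sum, mul_div_cancel₀ _ hcard]
    obtain ⟨m, hm⟩ := exists_natCast_eq_of_tendsto hsum
    exact eq_half_of_mul_eq_natCast (hN i).card_pos (hring i ▸ Finset.card_le_two) hc hm.symm
  refine ⟨half, fun i c hlim => ?_⟩
  obtain ⟨hc0, hc1⟩ : c ∈ Icc 0 1 :=
    isClosed_Icc.mem_of_tendsto hlim (.of_forall fun k => Ioo_subset_Icc_self (hmem i k))
  rcases hc0.eq_or_lt with rfl | hc0
  · exact .inl rfl
  rcases hc1.lt_or_eq with hc1 | rfl
  · exact .inr (.inl (half i c ⟨hc0, hc1⟩ hlim))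
  · exact .inr (.inr rfl)

/-- CODA model on the undirected ring (`n ≥ 3`): any limit of a convergent opinion
sequence which lies in `(0,1)` must equal `1/2`; hence every limit of a convergent
opinion sequence belongs to `{0, 1/2, 1}`. -/
theorem stmt_17
    (n : ℕ) (hn : 3 ≤ n) [NeZero n]
    (N : Fin n → Finset (Fin n))
    (hring : ∀ i : Fin n, N i = {i - 1, i + 1})
    (p : Fin n → ℕ → ℝ) (q : Fin n → ℕ → ℕ)
    (hq0 : ∀ i k, (p i k < 1 / 2 ∨ (p i k = 1 / 2 ∧ p i (k - 1) < 1 / 2)) → q i k = 0)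
    (hq1 : ∀ i k, ¬(p i k < 1 / 2 ∨ (p i k = 1 / 2 ∧ p i (k - 1) < 1 / 2)) → q i k = 1)
    (hupd : ∀ i k, p i (k + 1) =
      p i k + p i k * (1 - p i k) / (N i).card * ∑ j ∈ N i, ((q j k : ℝ) - p i k))
    (hp0 : ∀ i, p i 0 ∈ Set.Ioo (0 : ℝ) 1) :
    (∀ i : Fin n, ∀ c : ℝ, c ∈ Set.Ioo (0 : ℝ) 1 →
      Filter.Tendsto (fun k => p i k) Filter.atTop (nhds c) → c = 1 / 2) ∧
    (∀ i : Fin n, ∀ c : ℝ,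
      Filter.Tendsto (fun k => p i k) Filter.atTop (nhds c) →
      c = 0 ∨ c = 1 / 2 ∨ c = 1) :=
  stmt_17_general n N hring p q hq0 hq1 hupd hp0
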